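/- arXiv:2601.11701 — 8 statements merged into one kernel-verified Lean document; each statement's English description precedes it below -/
import Mathlib

section
/- If X ~ Binomial(n, p) with p ∈ (0,1], then for every integer k ≥ 1, E[X^k] ≤ (np)^k (1 + k/(2np))^k. -/
open Finset

lemma key_poly (u : ℝ) (hu : 0 ≤ u) (j : ℕ) :
    (u - ((j : ℝ) + 1)/2) * (u + 1/2)^j ≤ u^(j+1) := by
  induction j with
  | zero => norm_num
  | succ j ih =>
    push_cast
    have hj : (0:ℝ) ≤ (j:ℝ) := Nat.cast_nonneg j
    have h1 : (u - ((j:ℝ)+1+1)/2) * (u + 1/2) ≤ u * (u - ((j:ℝ)+1)/2) := by nlinarith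
    have h2 : (0:ℝ) ≤ (u + 1/2)^j := by positivity
    calc (u - ((j:ℝ)+1+1)/2) * (u + 1/2)^(j+1)
        = ((u - ((j:ℝ)+1+1)/2) * (u + 1/2)) * (u+1/2)^j := by push_cast; ring
      _ ≤ (u * (u - ((j:ℝ)+1)/2)) * (u+1/2)^j := mul_le_mul_of_nonneg_right h1 h2
      _ = u * ((u - ((j:ℝ)+1)/2) * (u+1/2)^j) := by ring
      _ ≤ u * u^(j+1) := mul_le_mul_of_nonneg_left ih hu
      _ = u^(j+1+1) := by ring

lemma sum_one (p : ℝ) (n : ℕ) :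
    ∑ x ∈ Finset.range (n+1), (n.choose x : ℝ) * p^x * (1-p)^(n-x) = 1 := by
  have h := add_pow p (1-p) n
  have : ∑ x ∈ Finset.range (n+1), (n.choose x : ℝ) * p^x * (1-p)^(n-x)
      = ∑ x ∈ Finset.range (n+1), p^x * (1-p)^(n-x) * (n.choose x : ℝ) := by
    apply Finset.sum_congr rfl; intro x _; ring
  rw [this, ← h]
  norm_num

lemma binom_moment (p : ℝ) (hp : 0 < p) (hp1 : p ≤ 1) :
    ∀ (k n : ℕ), ∑ x ∈ Finset.range (n+1),
      (n.choose x : ℝ) * p^x * (1-p)^(n-x) * (x:ℝ)^k ≤ ((n:ℝ)*p + (k:ℝ)/2)^k := by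
  intro k
  induction k using Nat.strong_induction_on with
  | _ k IH =>
  intro n
  match k with
  | 0 =>
    simp only [pow_zero, mul_one, Nat.cast_zero]
    rw [sum_one p n]
  | (k+1) =>
    match n with
    | 0 =>
      have h0 : ∑ x ∈ Finset.range (0 + 1),
          (Nat.choose 0 x : ℝ) * p ^ x * (1 - p) ^ (0 - x) * (x:ℝ) ^ (k + 1) = 0 := by
        rw [Finset.sum_range_one]
        norm_num
      rw [h0]
      positivity
    | (m+1) =>
      set q := 1 - p with hq
      -- Step A: shift index
      have hA : ∑ x ∈ Finset.range (m+2),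
          ((m+1).choose x : ℝ) * p^x * q^(m+1-x) * (x:ℝ)^(k+1)
          = ((m:ℝ)+1) * p * ∑ y ∈ Finset.range (m+1),
            (m.choose y : ℝ) * p^y * q^(m-y) * ((y:ℝ)+1)^k := by
        rw [Finset.sum_range_succ' (fun x => ((m+1).choose x : ℝ) * p^x * q^(m+1-x) * (x:ℝ)^(k+1)) (m+1)]
        rw [Finset.mul_sum]
        simp only [Nat.cast_zero, pow_zero]
        norm_num
        apply Finset.sum_congr rfl
        intro y hy
        have hc : ((m+1) * m.choose y : ℝ) = ((m+1).choose (y+1) : ℝ) * ((y:ℝ)+1) := by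
          have := Nat.add_one_mul_choose_eq m y
          have h2 : ((Nat.succ m * m.choose y : ℕ) : ℝ) = (((m+1).choose (y+1) * (y+1) : ℕ) : ℝ) := by
            exact_mod_cast congrArg (Nat.cast (R := ℝ)) this
          push_cast at h2
          push_cast
          linarith [h2]
        have hsub : m + 1 - (y + 1) = m - y := by omega
        rw [hsub]
        push_cast
        calc ((m+1).choose (y+1) : ℝ) * p^(y+1) * q^(m-y) * ((y:ℝ)+1)^(k+1)
            = (((m+1).choose (y+1) : ℝ) * ((y:ℝ)+1)) * (p^(y+1) * q^(m-y) * ((y:ℝ)+1)^k) := by ring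
          _ = (((m:ℝ)+1) * (m.choose y : ℝ)) * (p^(y+1) * q^(m-y) * ((y:ℝ)+1)^k) := by
              rw [← hc]
          _ = ((m:ℝ)+1) * p * ((m.choose y : ℝ) * p^y * q^(m-y) * ((y:ℝ)+1)^k) := by ring
      rw [hA]
      -- Step B: expand (y+1)^k and swap sums
      set s : ℝ := ((m:ℝ)+1)*p + (k:ℝ)/2 with hs
      have hB : ∑ y ∈ Finset.range (m+1),
          (m.choose y : ℝ) * p^y * q^(m-y) * ((y:ℝ)+1)^k ≤ (s+1)^k := by
        have hexp : ∀ y : ℕ, ((y:ℝ)+1)^k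
            = ∑ j ∈ Finset.range (k+1), (y:ℝ)^j * (k.choose j : ℝ) := by
          intro y
          have := add_pow (y:ℝ) 1 k
          simpa using this
        calc ∑ y ∈ Finset.range (m+1), (m.choose y : ℝ) * p^y * q^(m-y) * ((y:ℝ)+1)^k
            = ∑ y ∈ Finset.range (m+1), ∑ j ∈ Finset.range (k+1),
                (k.choose j : ℝ) * ((m.choose y : ℝ) * p^y * q^(m-y) * (y:ℝ)^j) := by
              apply Finset.sum_congr rfl; intro y _
              rw [hexp y, Finset.mul_sum]
              apply Finset.sum_congr rfl; intro j _; ring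
          _ = ∑ j ∈ Finset.range (k+1), (k.choose j : ℝ) *
                ∑ y ∈ Finset.range (m+1), (m.choose y : ℝ) * p^y * q^(m-y) * (y:ℝ)^j := by
              rw [Finset.sum_comm]
              apply Finset.sum_congr rfl; intro j _
              rw [Finset.mul_sum]
          _ ≤ ∑ j ∈ Finset.range (k+1), (k.choose j : ℝ) * s^j := by
              apply Finset.sum_le_sum
              intro j hj
              have hjk : j < k + 1 := Finset.mem_range.mp hj
              have h1 : ∑ y ∈ Finset.range (m+1), (m.choose y : ℝ) * p^y * q^(m-y) * (y:ℝ)^j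
                  ≤ ((m:ℝ)*p + (j:ℝ)/2)^j := IH j hjk m
              have h2 : ((m:ℝ)*p + (j:ℝ)/2)^j ≤ s^j := by
                apply pow_le_pow_left₀
                · positivity
                · have : (j:ℝ) ≤ (k:ℝ) := by exact_mod_cast Nat.lt_succ_iff.mp hjk
                  nlinarith [hp.le]
              exact mul_le_mul_of_nonneg_left (h1.trans h2) (by positivity)
          _ = (s+1)^k := by
              have := add_pow s 1 k
              simp only [one_pow, mul_one] at this
              rw [this]
              exact Finset.sum_congr rfl fun j _ => by ring
      -- Step C: combine
      have hc0 : (0:ℝ) < ((m:ℝ)+1) * p := by positivity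
      set u : ℝ := ((m:ℝ)+1)*p + ((k:ℝ)+1)/2 with hu
      have hkey := key_poly u (by positivity) k
      have hsu : s + 1 = u + 1/2 := by rw [hs, hu]; ring
      have hcu : ((m:ℝ)+1)*p = u - ((k:ℝ)+1)/2 := by rw [hu]; ring
      calc ((m:ℝ)+1) * p * ∑ y ∈ Finset.range (m+1),
            (m.choose y : ℝ) * p^y * q^(m-y) * ((y:ℝ)+1)^k
          ≤ ((m:ℝ)+1) * p * (s+1)^k := mul_le_mul_of_nonneg_left hB hc0.le
        _ = (u - ((k:ℝ)+1)/2) * (u + 1/2)^k := by rw [hsu, ← hcu]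
        _ ≤ u^(k+1) := hkey
        _ = (((m:ℝ)+1)*p + ((k:ℝ)+1)/2)^(k+1) := by rw [hu]
        _ = ((((m:ℕ)+1 : ℕ):ℝ)*p + (((k:ℕ)+1 : ℕ):ℝ)/2)^(k+1) := by push_cast; ring_nf

/-- If `X ~ Binomial(n, p)` with `p ∈ (0,1]`, then for every integer `k ≥ 1`,
`E[X^k] ≤ (np)^k (1 + k/(2np))^k`. -/
theorem binomial_moment_bound (n k : ℕ) (p : ℝ) (hp : 0 < p) (hp1 : p ≤ 1) (hk : 1 ≤ k) :
    ∑ x ∈ Finset.range (n + 1),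
      (n.choose x : ℝ) * p ^ x * (1 - p) ^ (n - x) * (x : ℝ) ^ k
      ≤ ((n : ℝ) * p) ^ k * (1 + (k : ℝ) / (2 * (n : ℝ) * p)) ^ k := by
  rcases Nat.eq_zero_or_pos n with hn | hn
  · subst hn
    simp [zero_pow (show k ≠ 0 by omega)]
  · have hnp : (0:ℝ) < (n:ℝ) * p := by
      have : (0:ℝ) < (n:ℝ) := by exact_mod_cast hn
      positivity
    have hrhs : ((n : ℝ) * p) ^ k * (1 + (k : ℝ) / (2 * (n : ℝ) * p)) ^ k
        = ((n:ℝ)*p + (k:ℝ)/2)^k := by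
      rw [← mul_pow]
      congr 1
      field_simp
    rw [hrhs]
    exact binom_moment p hp hp1 k n
end

section
/- Let T ~ Binomial(n, q) with q ∈ (0,1]. Then for any real p > 0, E[(n - T)^p / (T + 1)] ≤ ((n+1)(1-q))^p (1 + p/(2(n+1)(1-q)))^p / ((n+1)q), and also E[(n - T)^p / (T + 1)] ≤ n^p. -/
/-!
Write `E_{m,r}[f]` for `E[f Y]`, `Y ~ Binomial(m, r)`. The identity
`t * C(m+1, t) = (m+1) * C(m, t-1)` gives `(n+1) q E_{n,q}[g(T+1)/(T+1)] ≤ E_{n+1,q}[g]` for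
`g ≥ 0` (only the term at `0` is lost). For `g s = (n+1-s)^p` the right side is the `p`-th moment
of `Binomial(n+1, 1-q)`, so the first bound reduces to `E[(Y + a)^k] ≤ (m r + a + k/2)^k`.

That bound is Jensen's inequality for `k ≤ 1`. For `k > 1` write
`E[(Y + a)^k] = E[Y (Y + a)^(k-1)] + a E[(Y + a)^(k-1)]` and
`E_{m+1}[Y h Y] = (m+1) r E_m[h (Y+1)]`; by the case `k - 1` both expectations of
`(· + a)^(k-1)` are at most `(M + 1/2)^(k-1)` with `M = (m+1) r + a + k/2`, and weighted AM-GM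
gives `(M - k/2) (M + 1/2)^(k-1) ≤ (M - 1/(2k))^k ≤ M^k`.
-/

open Finset

theorem mul_rpow_sub_one_le {x y k : ℝ} (hx : 0 ≤ x) (hy : 0 ≤ y) (hk : 1 ≤ k) :
    x * y ^ (k - 1) ≤ ((x + (k - 1) * y) / k) ^ k := by
  have hk₀ : 0 < k := by linarith
  have hamgm := Real.geom_mean_le_arith_mean2_weighted (inv_nonneg.2 hk₀.le)
    (div_nonneg (sub_nonneg.2 hk) hk₀.le) hx hy (by field_simp; ring)
  calc x * y ^ (k - 1) = (x ^ k⁻¹ * y ^ ((k - 1) / k)) ^ k := by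
        rw [Real.mul_rpow (by positivity) (by positivity), ← Real.rpow_mul hx,
          ← Real.rpow_mul hy, inv_mul_cancel₀ hk₀.ne', div_mul_cancel₀ _ hk₀.ne', Real.rpow_one]
    _ ≤ (k⁻¹ * x + (k - 1) / k * y) ^ k := by gcongr
    _ = ((x + (k - 1) * y) / k) ^ k := by ring_nf

noncomputable def binomialWeight (m : ℕ) (r : ℝ) (t : ℕ) : ℝ :=
  m.choose t * r ^ t * (1 - r) ^ (m - t)

noncomputable def binomialExpect (m : ℕ) (r : ℝ) (f : ℕ → ℝ) : ℝ :=
  ∑ t ∈ range (m + 1), binomialWeight m r t * f t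

section

variable {m : ℕ} {r : ℝ}

theorem binomialWeight_nonneg (hr₀ : 0 ≤ r) (hr₁ : r ≤ 1) (t : ℕ) :
    0 ≤ binomialWeight m r t := by
  have : 0 ≤ 1 - r := sub_nonneg.2 hr₁
  unfold binomialWeight
  positivity

theorem sum_binomialWeight (m : ℕ) (r : ℝ) :
    ∑ t ∈ range (m + 1), binomialWeight m r t = 1 := by
  have h := (add_pow r (1 - r) m).symm
  rw [add_sub_cancel, one_pow] at h
  rw [← h]
  exact sum_congr rfl fun t _ ↦ by unfold binomialWeight; ring

theorem binomialExpect_zero (r : ℝ) (f : ℕ → ℝ) : binomialExpect 0 r f = f 0 := by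
  simp [binomialExpect, binomialWeight]

theorem binomialExpect_const (m : ℕ) (r c : ℝ) : binomialExpect m r (fun _ ↦ c) = c := by
  rw [binomialExpect, ← sum_mul, sum_binomialWeight, one_mul]

theorem binomialExpect_add (f g : ℕ → ℝ) :
    binomialExpect m r (fun t ↦ f t + g t) = binomialExpect m r f + binomialExpect m r g := by
  simp only [binomialExpect, mul_add, sum_add_distrib]

theorem binomialExpect_const_mul (c : ℝ) (f : ℕ → ℝ) :
    binomialExpect m r (fun t ↦ c * f t) = c * binomialExpect m r f := by
  simp only [binomialExpect, mul_sum]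
  exact sum_congr rfl fun t _ ↦ by ring

theorem binomialExpect_congr {f g : ℕ → ℝ} (h : ∀ t ≤ m, f t = g t) :
    binomialExpect m r f = binomialExpect m r g :=
  sum_congr rfl fun t ht ↦ by rw [h t (Nat.lt_succ_iff.1 (mem_range.1 ht))]

theorem binomialExpect_mono (hr₀ : 0 ≤ r) (hr₁ : r ≤ 1) {f g : ℕ → ℝ}
    (h : ∀ t ≤ m, f t ≤ g t) : binomialExpect m r f ≤ binomialExpect m r g :=
  sum_le_sum fun t ht ↦ mul_le_mul_of_nonneg_left (h t (Nat.lt_succ_iff.1 (mem_range.1 ht)))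
    (binomialWeight_nonneg hr₀ hr₁ t)

theorem binomialExpect_reflect (f : ℕ → ℝ) :
    binomialExpect m r f = binomialExpect m (1 - r) (fun t ↦ f (m - t)) := by
  rw [binomialExpect, ← sum_range_reflect]
  refine sum_congr rfl fun t ht ↦ ?_
  have ht : t ≤ m := Nat.lt_succ_iff.1 (mem_range.1 ht)
  rw [Nat.add_sub_cancel, binomialWeight, binomialWeight, Nat.choose_symm ht,
    Nat.sub_sub_self ht, sub_sub_cancel]
  ring

theorem binomialExpect_succ_cast_mul (m : ℕ) (r : ℝ) (f : ℕ → ℝ) :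
    binomialExpect (m + 1) r (fun t ↦ t * f t)
      = (m + 1) * r * binomialExpect m r (fun t ↦ f (t + 1)) := by
  rw [binomialExpect, sum_range_succ', binomialExpect, mul_sum]
  simp only [Nat.cast_zero, zero_mul, mul_zero, add_zero]
  refine sum_congr rfl fun t _ ↦ ?_
  have hchoose : ((m + 1).choose (t + 1) : ℝ) * (t + 1) = (m + 1) * m.choose t := by
    exact_mod_cast (Nat.add_one_mul_choose_eq m t).symm
  simp only [binomialWeight, Nat.add_sub_add_right]
  push_cast
  linear_combination r ^ (t + 1) * (1 - r) ^ (m - t) * f (t + 1) * hchoose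

theorem binomialExpect_cast (m : ℕ) (r : ℝ) :
    binomialExpect m r (fun t ↦ (t : ℝ)) = m * r := by
  cases m with
  | zero => simp [binomialExpect_zero]
  | succ m => simpa [binomialExpect_const] using binomialExpect_succ_cast_mul m r (fun _ ↦ 1)

theorem binomialExpect_add_rpow_le_of_le_one (hr₀ : 0 ≤ r) (hr₁ : r ≤ 1) (m : ℕ) {a k : ℝ}
    (ha : 0 ≤ a) (hk₀ : 0 ≤ k) (hk₁ : k ≤ 1) :
    binomialExpect m r (fun t ↦ ((t : ℝ) + a) ^ k) ≤ (m * r + a) ^ k := by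
  have hmean : binomialExpect m r (fun t ↦ (t : ℝ) + a) = m * r + a := by
    rw [binomialExpect_add, binomialExpect_cast, binomialExpect_const]
  rw [← hmean]
  exact (Real.concaveOn_rpow hk₀ hk₁).le_map_sum (fun t _ ↦ binomialWeight_nonneg hr₀ hr₁ t)
    (sum_binomialWeight m r) fun t _ ↦ Set.mem_Ici.2 (by positivity)

theorem binomialExpect_add_rpow_le_of_sub_one (hr₀ : 0 ≤ r) {k : ℝ} (hk : 1 ≤ k)
    (ih : ∀ (m : ℕ) (a : ℝ), 0 ≤ a → binomialExpect m r (fun t ↦ ((t : ℝ) + a) ^ (k - 1))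
      ≤ (m * r + a + (k - 1) / 2) ^ (k - 1))
    (m : ℕ) {a : ℝ} (ha : 0 ≤ a) :
    binomialExpect m r (fun t ↦ ((t : ℝ) + a) ^ k) ≤ (m * r + a + k / 2) ^ k := by
  cases m with
  | zero =>
    rw [binomialExpect_zero]
    exact Real.rpow_le_rpow (by positivity) (by push_cast; linarith) (by linarith)
  | succ m =>
    set M : ℝ := (m + 1 : ℕ) * r + a + k / 2 with hM
    push_cast at hM
    have hmr : 0 ≤ (m : ℝ) * r := by positivity
    have hsplit (t : ℕ) :
        ((t : ℝ) + a) ^ k = t * ((t : ℝ) + a) ^ (k - 1) + a * ((t : ℝ) + a) ^ (k - 1) := by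
      rw [← add_mul, ← Real.rpow_one_add' (by positivity) (by linarith), add_sub_cancel]
    have hshifted : binomialExpect m r (fun t ↦ (((t + 1 : ℕ) : ℝ) + a) ^ (k - 1))
        ≤ (M + 1 / 2) ^ (k - 1) :=
      calc _ = binomialExpect m r (fun t ↦ ((t : ℝ) + (a + 1)) ^ (k - 1)) := by
            simp only [Nat.cast_add, Nat.cast_one, add_right_comm, add_assoc]
        _ ≤ _ := ih m (a + 1) (by positivity)
        _ ≤ _ := Real.rpow_le_rpow (by positivity) (by linarith) (by linarith)
    have hsame : binomialExpect (m + 1) r (fun t ↦ ((t : ℝ) + a) ^ (k - 1))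
        ≤ (M + 1 / 2) ^ (k - 1) :=
      (ih (m + 1) a ha).trans
        (Real.rpow_le_rpow (by positivity) (by push_cast; linarith) (by linarith))
    calc binomialExpect (m + 1) r (fun t ↦ ((t : ℝ) + a) ^ k)
        = (m + 1) * r * binomialExpect m r (fun t ↦ (((t + 1 : ℕ) : ℝ) + a) ^ (k - 1))
          + a * binomialExpect (m + 1) r (fun t ↦ ((t : ℝ) + a) ^ (k - 1)) := by
          simp only [hsplit, binomialExpect_add, binomialExpect_const_mul,
            binomialExpect_succ_cast_mul]
      _ ≤ (m + 1) * r * (M + 1 / 2) ^ (k - 1) + a * (M + 1 / 2) ^ (k - 1) := by gcongr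
      _ = (M - k / 2) * (M + 1 / 2) ^ (k - 1) := by rw [hM]; ring
      _ ≤ ((M - k / 2 + (k - 1) * (M + 1 / 2)) / k) ^ k :=
          mul_rpow_sub_one_le (by linarith) (by linarith) hk
      _ = (M - 1 / (2 * k)) ^ k := by congr 1; field_simp; ring
      _ ≤ M ^ k := by
          have : 1 / (2 * k) ≤ k / 2 := by
            rw [div_le_div_iff₀ (by positivity) (by norm_num)]; nlinarith
          exact Real.rpow_le_rpow (by linarith)
            (by linarith [show 0 < 1 / (2 * k) by positivity]) (by linarith)

theorem binomialExpect_add_rpow_le (hr₀ : 0 ≤ r) (hr₁ : r ≤ 1) {k : ℝ} (hk : 0 ≤ k) (m : ℕ)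
    {a : ℝ} (ha : 0 ≤ a) :
    binomialExpect m r (fun t ↦ ((t : ℝ) + a) ^ k) ≤ (m * r + a + k / 2) ^ k := by
  have of_le_one {k : ℝ} (hk : 0 ≤ k) (hk₁ : k ≤ 1) (m : ℕ) {a : ℝ} (ha : 0 ≤ a) :
      binomialExpect m r (fun t ↦ ((t : ℝ) + a) ^ k) ≤ (m * r + a + k / 2) ^ k :=
    (binomialExpect_add_rpow_le_of_le_one hr₀ hr₁ m ha hk hk₁).trans
      (Real.rpow_le_rpow (by positivity) (by linarith) hk)
  obtain ⟨N, hkN⟩ := exists_nat_ge k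
  induction N generalizing k m a with
  | zero => exact of_le_one hk (by push_cast at hkN; linarith) m ha
  | succ N ih =>
    rcases le_or_gt k 1 with hk₁ | hk₁
    · exact of_le_one hk hk₁ m ha
    · exact binomialExpect_add_rpow_le_of_sub_one hr₀ hk₁.le
        (fun m a ha ↦ ih (by linarith) m ha (by push_cast at hkN; linarith)) m ha

theorem binomialExpect_cast_sub_rpow_le (hr₀ : 0 ≤ r) (hr₁ : r ≤ 1) {k : ℝ} (hk : 0 ≤ k)
    (m : ℕ) : binomialExpect m r (fun t ↦ ((m : ℝ) - t) ^ k) ≤ (m * (1 - r) + k / 2) ^ k := by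
  rw [binomialExpect_reflect]
  calc _ = binomialExpect m (1 - r) (fun t ↦ ((t : ℝ) + 0) ^ k) :=
        binomialExpect_congr fun t ht ↦ by rw [Nat.cast_sub ht, sub_sub_cancel, add_zero]
    _ ≤ (m * (1 - r) + 0 + k / 2) ^ k :=
        binomialExpect_add_rpow_le (by linarith) (by linarith) hk m le_rfl
    _ = (m * (1 - r) + k / 2) ^ k := by rw [add_zero]

theorem mul_binomialExpect_div_cast_succ_le (hr₀ : 0 ≤ r) (hr₁ : r ≤ 1) (m : ℕ)
    {g : ℕ → ℝ} (hg : ∀ t ≤ m + 1, 0 ≤ g t) :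
    (m + 1) * r * binomialExpect m r (fun t ↦ g (t + 1) / (t + 1))
      ≤ binomialExpect (m + 1) r g := by
  have hcast : binomialExpect m r (fun t ↦ g (t + 1) / (t + 1))
      = binomialExpect m r (fun t ↦ g (t + 1) / ((t + 1 : ℕ) : ℝ)) := by
    push_cast; rfl
  rw [hcast, ← binomialExpect_succ_cast_mul m r (fun t ↦ g t / t)]
  refine binomialExpect_mono hr₀ hr₁ fun t ht ↦ ?_
  rcases Nat.eq_zero_or_pos t with rfl | ht₀
  · simpa using hg 0 (Nat.zero_le _)
  · rw [mul_div_cancel₀ _ (by positivity)]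

theorem binomialExpect_cast_sub_rpow_div_succ_le (hr₀ : 0 ≤ r) (hr₁ : r ≤ 1) {k : ℝ}
    (hk : 0 ≤ k) (m : ℕ) :
    binomialExpect m r (fun t ↦ ((m : ℝ) - t) ^ k / (t + 1)) ≤ (m : ℝ) ^ k := by
  calc _ ≤ binomialExpect m r (fun _ ↦ (m : ℝ) ^ k) := by
        refine binomialExpect_mono hr₀ hr₁ fun t ht ↦ ?_
        have hmt : 0 ≤ (m : ℝ) - t := sub_nonneg.2 (by exact_mod_cast ht)
        have ht₀ : (0 : ℝ) ≤ t := t.cast_nonneg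
        calc ((m : ℝ) - t) ^ k / (t + 1) ≤ ((m : ℝ) - t) ^ k :=
              div_le_self (by positivity) (by linarith)
          _ ≤ (m : ℝ) ^ k := Real.rpow_le_rpow hmt (by linarith) hk
    _ = (m : ℝ) ^ k := binomialExpect_const m r _

end

/-- For `T ~ Binomial(n, q)` with `q ∈ (0,1]` and real `p > 0`:
(assuming `q < 1`) `E[(n-T)^p/(T+1)] ≤ ((n+1)(1-q))^p (1 + p/(2(n+1)(1-q)))^p / ((n+1)q)`,
and also `E[(n-T)^p/(T+1)] ≤ n^p`. -/
theorem binomial_ratio_moment_bound (n : ℕ) (q : ℝ) (hq : 0 < q) (hq1 : q ≤ 1)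
    (p : ℝ) (hp : 0 < p) :
    (q < 1 →
      ∑ t ∈ Finset.range (n + 1),
        (n.choose t : ℝ) * q ^ t * (1 - q) ^ (n - t) *
          ((((n : ℝ) - (t : ℝ)) ^ p) / ((t : ℝ) + 1))
        ≤ (((n : ℝ) + 1) * (1 - q)) ^ p * (1 + p / (2 * ((n : ℝ) + 1) * (1 - q))) ^ p
            / (((n : ℝ) + 1) * q)) ∧
    ∑ t ∈ Finset.range (n + 1),
        (n.choose t : ℝ) * q ^ t * (1 - q) ^ (n - t) *
          ((((n : ℝ) - (t : ℝ)) ^ p) / ((t : ℝ) + 1))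
      ≤ (n : ℝ) ^ p := by
  change (q < 1 → binomialExpect n q (fun t ↦ ((n : ℝ) - t) ^ p / (t + 1)) ≤ _) ∧
    binomialExpect n q (fun t ↦ ((n : ℝ) - t) ^ p / (t + 1)) ≤ _
  refine ⟨fun hq1' ↦ ?_, ?_⟩
  · have h1q : 1 - q ≠ 0 := sub_ne_zero.2 hq1'.ne'
    have hA : 0 < ((n : ℝ) + 1) * (1 - q) := by nlinarith
    have hshift : binomialExpect n q (fun t ↦ ((n : ℝ) - t) ^ p / (t + 1))
        = binomialExpect n q (fun t ↦ (((n + 1 : ℕ) : ℝ) - (t + 1 : ℕ)) ^ p / (t + 1)) :=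
      binomialExpect_congr fun t _ ↦ by push_cast; ring_nf
    rw [← Real.mul_rpow hA.le (by positivity), le_div_iff₀ (by positivity), hshift, mul_comm]
    calc _ ≤ binomialExpect (n + 1) q (fun t ↦ (((n + 1 : ℕ) : ℝ) - t) ^ p) :=
          mul_binomialExpect_div_cast_succ_le hq.le hq1 n fun t ht ↦
            Real.rpow_nonneg (sub_nonneg.2 (by exact_mod_cast ht)) p
      _ ≤ (((n + 1 : ℕ) : ℝ) * (1 - q) + p / 2) ^ p :=
          binomialExpect_cast_sub_rpow_le hq.le hq1 hp.le (n + 1)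
      _ = _ := by congr 1; field_simp; push_cast; ring
  · exact binomialExpect_cast_sub_rpow_div_succ_le hq.le hq1 hp.le n
end

section
/- Given any p ∈ [1, ∞), the sample mean of n points in [-r, r] satisfies the ℓ_p average-case stability bound: (1/(n+1)^2) sup over datasets (X_1,...,X_{n+1}) ∈ [-r,r]^{n+1} of ∑_{1 ≤ i, j ≤ n+1} |θ̂(D^{\i}) - θ̂(D^{\j})|^p ≤ (1/2)(2r/n)^p, where θ̂ is the sample mean on n points and D^{\i} deletes X_i. -/
/-!
Writing `N` for the number of points, the case `p = 1` is the inequality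
`∑_{i,j} |x i - x j| ≤ N² r`: summing `r |a - b| ≤ r² - a b` (valid on `[-r, r]`) over all pairs
gives `r ∑_{i,j} |x i - x j| ≤ N² r² - (∑ x)² ≤ N² r²`. General `p ≥ 1` reduces to it, since every
`|x i - x j|` lies in `[0, 2r]`, where `t ^ p ≤ (2r) ^ (p - 1) t`. Deleting one point moves the mean
by `x i / n`, so the differences of the leave-one-out means are the differences of the points,
scaled by `1 / n`.
-/

open Finset

lemma mul_abs_sub_le_sq_sub_mul {a b r : ℝ} (ha : |a| ≤ r) (hb : |b| ≤ r) :
    r * |a - b| ≤ r ^ 2 - a * b := by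
  obtain ⟨ha₁, ha₂⟩ := abs_le.mp ha
  obtain ⟨hb₁, hb₂⟩ := abs_le.mp hb
  rcases le_total a b with hab | hab
  · rw [abs_of_nonpos (sub_nonpos.mpr hab)]
    nlinarith [mul_nonneg (sub_nonneg.mpr hb₂) (neg_le_iff_add_nonneg.mp ha₁)]
  · rw [abs_of_nonneg (sub_nonneg.mpr hab)]
    nlinarith [mul_nonneg (sub_nonneg.mpr ha₂) (neg_le_iff_add_nonneg.mp hb₁)]

lemma Real.rpow_le_rpow_sub_one_mul {t c p : ℝ} (ht : 0 ≤ t) (htc : t ≤ c) (hp : 1 ≤ p) :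
    t ^ p ≤ c ^ (p - 1) * t := by
  calc t ^ p = t ^ (p - 1) * t := by
        rw [← Real.rpow_add_one' ht (by linarith), sub_add_cancel]
    _ ≤ c ^ (p - 1) * t := by gcongr

section PairwiseDifferences

variable {ι : Type*} [Fintype ι] {x : ι → ℝ} {r : ℝ}

lemma sum_sum_abs_sub_le (hr : 0 < r) (hx : ∀ i, |x i| ≤ r) :
    ∑ i, ∑ j, |x i - x j| ≤ (Fintype.card ι : ℝ) ^ 2 * r := by
  refine le_of_mul_le_mul_left ?_ hr
  calc r * ∑ i, ∑ j, |x i - x j| ≤ ∑ i, ∑ j, (r ^ 2 - x i * x j) := by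
        simp only [mul_sum]
        gcongr with i _ j _
        exact mul_abs_sub_le_sq_sub_mul (hx i) (hx j)
    _ = (Fintype.card ι : ℝ) ^ 2 * r ^ 2 - (∑ i, x i) ^ 2 := by
        simp only [sum_sub_distrib, sum_const, card_univ, nsmul_eq_mul, ← mul_sum, ← sum_mul]
        ring
    _ ≤ r * ((Fintype.card ι : ℝ) ^ 2 * r) := by nlinarith [sq_nonneg (∑ i, x i)]

lemma sum_sum_abs_sub_rpow_le (hr : 0 < r) (hx : ∀ i, |x i| ≤ r) {p : ℝ} (hp : 1 ≤ p) :
    ∑ i, ∑ j, |x i - x j| ^ p ≤ (Fintype.card ι : ℝ) ^ 2 / 2 * (2 * r) ^ p := by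
  have h_diff_le (i j : ι) : |x i - x j| ≤ 2 * r := by
    linarith [abs_sub (x i) (x j), hx i, hx j]
  calc ∑ i, ∑ j, |x i - x j| ^ p ≤ ∑ i, ∑ j, (2 * r) ^ (p - 1) * |x i - x j| := by
        gcongr with i _ j _
        exact Real.rpow_le_rpow_sub_one_mul (abs_nonneg _) (h_diff_le i j) hp
    _ = (2 * r) ^ (p - 1) * ∑ i, ∑ j, |x i - x j| := by simp only [mul_sum]
    _ ≤ (2 * r) ^ (p - 1) * ((Fintype.card ι : ℝ) ^ 2 * r) := by
        gcongr
        exact sum_sum_abs_sub_le hr hx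
    _ = (Fintype.card ι : ℝ) ^ 2 / 2 * (2 * r) ^ p := by
        have h_split : (2 * r) ^ p = (2 * r) ^ (p - 1) * (2 * r) := by
          rw [← Real.rpow_add_one' (by positivity) (by linarith), sub_add_cancel]
        rw [h_split]
        ring

end PairwiseDifferences

theorem sample_mean_lp_stability_general (n : ℕ) (r : ℝ) (hr : 0 < r)
    (p : ℝ) (hp : 1 ≤ p)
    (X : Fin (n + 1) → ℝ) (hX : ∀ i, |X i| ≤ r) :
    (1 / ((n : ℝ) + 1) ^ 2) *
      ∑ i : Fin (n + 1), ∑ j : Fin (n + 1),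
        |((∑ k, X k) - X i) / (n : ℝ) - ((∑ k, X k) - X j) / (n : ℝ)| ^ p
      ≤ (1 / 2) * (2 * r / (n : ℝ)) ^ p := by
  have h_term (i j : Fin (n + 1)) :
      |((∑ k, X k) - X i) / (n : ℝ) - ((∑ k, X k) - X j) / (n : ℝ)| ^ p
        = |X i - X j| ^ p / (n : ℝ) ^ p := by
    rw [← sub_div, sub_sub_sub_cancel_left, abs_div, Nat.abs_cast, abs_sub_comm,
      Real.div_rpow (abs_nonneg _) n.cast_nonneg]
  have h_points := sum_sum_abs_sub_rpow_le hr hX hp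
  rw [Fintype.card_fin, Nat.cast_add_one] at h_points
  calc (1 / ((n : ℝ) + 1) ^ 2) * ∑ i : Fin (n + 1), ∑ j : Fin (n + 1),
        |((∑ k, X k) - X i) / (n : ℝ) - ((∑ k, X k) - X j) / (n : ℝ)| ^ p
      = (∑ i, ∑ j, |X i - X j| ^ p) / ((n : ℝ) + 1) ^ 2 / (n : ℝ) ^ p := by
        simp only [h_term, ← sum_div]
        ring
    _ ≤ (1 / 2) * (2 * r) ^ p / (n : ℝ) ^ p := by
        gcongr
        rw [div_le_iff₀ (by positivity)]
        linarith
    _ = (1 / 2) * (2 * r / (n : ℝ)) ^ p := by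
        rw [Real.div_rpow (by positivity) n.cast_nonneg, mul_div_assoc]

/-- ℓ_p average-case stability of the sample mean: for any `p ≥ 1` and any dataset
in `[-r,r]^{n+1}`, `(1/(n+1)^2) ∑_{i,j} |θ̂(D^{\i}) - θ̂(D^{\j})|^p ≤ (1/2)(2r/n)^p`. -/
theorem sample_mean_lp_stability (n : ℕ) (hn : 1 ≤ n) (r : ℝ) (hr : 0 < r)
    (p : ℝ) (hp : 1 ≤ p)
    (X : Fin (n + 1) → ℝ) (hX : ∀ i, |X i| ≤ r) :
    (1 / ((n : ℝ) + 1) ^ 2) *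
      ∑ i : Fin (n + 1), ∑ j : Fin (n + 1),
        |((∑ k, X k) - X i) / (n : ℝ) - ((∑ k, X k) - X j) / (n : ℝ)| ^ p
      ≤ (1 / 2) * (2 * r / (n : ℝ)) ^ p :=
  sample_mean_lp_stability_general n r hr p hp X hX
end

section
/- For n ≥ 1 and any distribution P on R with support in [-r, r], mean θ = E[X], and X̄ the sample mean of n i.i.d. draws, the shrinkage estimator θ̂ = X̄/(1+δ) with δ ≥ 0 satisfies E(θ̂ - θ)^2 = (Var(X)/n + θ^2 δ^2) / (1+δ)^2; consequently, sup over all P supported in [-r,r] of E(θ̂ - θ)^2 equals r^2/(n(1+δ)^2) if δ ≤ 1/√n and r^2 δ^2/(1+δ)^2 if δ > 1/√n. -/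
/-!
The risk of `X̄ / (1 + δ)` splits into its variance `Var X / (n (1 + δ)²)` and its squared bias
`(θ δ / (1 + δ))²`. Since `Var X + θ² = E X² ≤ r²` (Bhatia–Davis), the numerator
`Var X / n + θ² δ²` is at most `r² max (1 / n) δ²`; the maximum is attained by the symmetric
two-point law on `±r` when `1 / n` is the larger term, and by the point mass at `r` otherwise.
-/

open MeasureTheory ProbabilityTheory
open scoped ENNReal

section Moments

variable {Ω : Type*} {mΩ : MeasurableSpace Ω} {μ : Measure Ω} [IsProbabilityMeasure μ]

lemma variance_add_sq_integral_le_sq {X : Ω → ℝ} {r : ℝ} (hX : AEMeasurable X μ)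
    (h : ∀ᵐ ω ∂μ, |X ω| ≤ r) :
    Var[X; μ] + μ[X] ^ 2 ≤ r ^ 2 := by
  have := variance_le_sub_mul_sub (h.mono fun _ hω => abs_le.mp hω) hX
  nlinarith

lemma integral_sub_sq_eq_variance_add_sq {Y : Ω → ℝ} (hY : MemLp Y 2 μ) (c : ℝ) :
    ∫ ω, (Y ω - c) ^ 2 ∂μ = Var[Y; μ] + (μ[Y] - c) ^ 2 := by
  have hvar : Var[fun ω => Y ω - c; μ] = Var[Y; μ] :=
    variance_sub_const hY.aestronglyMeasurable c
  have hmean : μ[fun ω => Y ω - c] = μ[Y] - c := by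
    rw [integral_sub (hY.integrable one_le_two) (integrable_const c)]
    simp
  have hYc : MemLp (fun ω => Y ω - c) 2 μ := hY.sub (memLp_const c)
  rw [← hvar, variance_eq_sub hYc, hmean]
  simp only [Pi.pow_apply]
  ring

end Moments

section IidSample

variable {ι : Type*} [Fintype ι] {P : Measure ℝ} [IsProbabilityMeasure P]

lemma integral_sum_eval_pi (hP : Integrable id P) :
    ∫ D, ∑ i, D i ∂(Measure.pi fun _ : ι => P) = Fintype.card ι * ∫ x, x ∂P := by
  rw [integral_finsetSum (f := fun i (D : ι → ℝ) => D i) _ fun i _ => integrable_eval hP]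
  simp [integral_eval]

lemma variance_sum_eval_pi (hP : MemLp id 2 P) :
    Var[fun D => ∑ i, D i; Measure.pi fun _ : ι => P] = Fintype.card ι * Var[id; P] := by
  have := variance_sum_pi (μ := fun _ : ι => P) (X := fun _ => id) fun _ => hP
  simpa [Finset.sum_fn] using this

lemma integral_mul_sum_eval_sub_sq_pi (hP : MemLp id 2 P) (a c : ℝ) :
    ∫ D, (a * ∑ i, D i - c) ^ 2 ∂(Measure.pi fun _ : ι => P)
      = a ^ 2 * Fintype.card ι * Var[id; P] + (a * Fintype.card ι * ∫ x, x ∂P - c) ^ 2 := by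
  have hsum : MemLp (fun D : ι → ℝ => ∑ i, D i) 2 (Measure.pi fun _ : ι => P) :=
    memLp_finsetSum (f := fun i (D : ι → ℝ) => D i) _
      fun i _ => hP.comp_measurePreserving (measurePreserving_eval _ i)
  rw [integral_sub_sq_eq_variance_add_sq (hsum.const_mul a), variance_const_mul,
    variance_sum_eval_pi hP, integral_const_mul, integral_sum_eval_pi (hP.integrable one_le_two)]
  ring

end IidSample

lemma memLp_id_of_ae_abs_le {P : Measure ℝ} [IsFiniteMeasure P] {r : ℝ} (h : ∀ᵐ x ∂P, |x| ≤ r) :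
    MemLp id 2 P :=
  MemLp.of_bound aestronglyMeasurable_id r h

lemma div_add_mul_le_mul_max {V t n d s : ℝ} (hV : 0 ≤ V) (ht : 0 ≤ t) (hn : 0 < n)
    (h : V + t ≤ s) : V / n + t * d ≤ s * max n⁻¹ d := by
  have hm : 0 ≤ max n⁻¹ d := (inv_pos.2 hn).le.trans (le_max_left _ _)
  calc V / n + t * d ≤ V * max n⁻¹ d + t * max n⁻¹ d := by
        rw [div_eq_mul_inv]
        gcongr
        exacts [le_max_left _ _, le_max_right _ _]
    _ = (V + t) * max n⁻¹ d := by ring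
    _ ≤ s * max n⁻¹ d := by gcongr

lemma max_inv_sq_eq_ite {n δ : ℝ} (hn : 0 < n) (hδ : 0 ≤ δ) :
    max n⁻¹ (δ ^ 2) = if δ ≤ 1 / √n then n⁻¹ else δ ^ 2 := by
  have hiff : δ ≤ 1 / √n ↔ δ ^ 2 ≤ n⁻¹ := by
    rw [one_div, ← Real.sqrt_inv, Real.le_sqrt hδ (by positivity)]
  split_ifs with h
  · exact max_eq_left (hiff.1 h)
  · exact max_eq_right (not_le.1 (hiff.not.1 h)).le

section SymmetricTwoPoint

noncomputable def symmetricTwoPoint (r : ℝ) : Measure ℝ :=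
  (2⁻¹ : ℝ≥0∞) • (Measure.dirac (-r) + Measure.dirac r)

variable {r : ℝ}

instance : IsProbabilityMeasure (symmetricTwoPoint r) :=
  ⟨by simp [symmetricTwoPoint, ENNReal.inv_two_add_inv_two]⟩

lemma integral_symmetricTwoPoint (f : ℝ → ℝ) :
    ∫ x, f x ∂symmetricTwoPoint r = (f (-r) + f r) / 2 := by
  rw [symmetricTwoPoint, integral_smul_measure,
    integral_add_measure (integrable_dirac enorm_lt_top) (integrable_dirac enorm_lt_top),
    integral_dirac, integral_dirac]
  simp only [ENNReal.toReal_inv, ENNReal.toReal_ofNat, smul_eq_mul]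
  ring

lemma variance_id_symmetricTwoPoint : Var[id; symmetricTwoPoint r] = r ^ 2 := by
  rw [variance_of_integral_eq_zero aemeasurable_id (by simp [integral_symmetricTwoPoint]),
    integral_symmetricTwoPoint]
  simp

lemma ae_abs_le_symmetricTwoPoint (hr : 0 ≤ r) : ∀ᵐ x ∂symmetricTwoPoint r, |x| ≤ r := by
  simp [symmetricTwoPoint, ae_add_measure_iff, ae_dirac_eq, abs_of_nonneg hr]

end SymmetricTwoPoint

noncomputable def shrinkageRisk (n : ℕ) (δ : ℝ) (P : Measure ℝ) : ℝ :=
  ∫ D, ((∑ i, D i) / (n : ℝ) / (1 + δ) - ∫ x, x ∂P) ^ 2 ∂(Measure.pi fun _ : Fin n => P)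

lemma shrinkageRisk_eq {n : ℕ} (hn : n ≠ 0) {δ : ℝ} (hδ : 1 + δ ≠ 0) {P : Measure ℝ}
    [IsProbabilityMeasure P] (hP : MemLp id 2 P) :
    shrinkageRisk n δ P = (Var[id; P] / n + (∫ x, x ∂P) ^ 2 * δ ^ 2) / (1 + δ) ^ 2 := by
  have hestimator : ∀ D : Fin n → ℝ,
      (∑ i, D i) / (n : ℝ) / (1 + δ) = (n * (1 + δ))⁻¹ * ∑ i, D i := fun D => by
    field_simp
  simp_rw [shrinkageRisk, hestimator, integral_mul_sum_eval_sub_sq_pi hP, Fintype.card_fin]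
  field_simp
  ring

lemma isGreatest_shrinkageRisk {n : ℕ} (hn : n ≠ 0) {r δ : ℝ} (hr : 0 ≤ r) (hδ : 0 ≤ δ) :
    IsGreatest
      {e | ∃ P : Measure ℝ, IsProbabilityMeasure P ∧ (∀ᵐ x ∂P, |x| ≤ r) ∧ e = shrinkageRisk n δ P}
      (r ^ 2 * max (n : ℝ)⁻¹ (δ ^ 2) / (1 + δ) ^ 2) := by
  have risk_eq (P : Measure ℝ) [IsProbabilityMeasure P] (hPr : ∀ᵐ x ∂P, |x| ≤ r) :=
    shrinkageRisk_eq hn (by positivity : 1 + δ ≠ 0) (memLp_id_of_ae_abs_le hPr)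
  refine ⟨?_, ?_⟩
  · rcases max_choice (n : ℝ)⁻¹ (δ ^ 2) with hmax | hmax <;> rw [hmax]
    · refine ⟨symmetricTwoPoint r, inferInstance, ae_abs_le_symmetricTwoPoint hr, ?_⟩
      rw [risk_eq _ (ae_abs_le_symmetricTwoPoint hr), variance_id_symmetricTwoPoint,
        integral_symmetricTwoPoint]
      ring
    · have hdirac : ∀ᵐ x ∂Measure.dirac r, |x| ≤ r := by simp [ae_dirac_eq, abs_of_nonneg hr]
      refine ⟨Measure.dirac r, inferInstance, hdirac, ?_⟩
      rw [risk_eq _ hdirac, variance_dirac, integral_dirac]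
      ring
  · rintro _ ⟨P, hP, hPr, rfl⟩
    rw [risk_eq P hPr]
    gcongr
    exact div_add_mul_le_mul_max (variance_nonneg _ _) (sq_nonneg _) (by positivity)
      (variance_add_sq_integral_le_sq aemeasurable_id hPr)

/-- Risk of the shrinkage estimator `X̄/(1+δ)` for bounded mean estimation:
exact risk formula for each `P` supported in `[-r,r]`, and the value of the
supremum of the risk over all such `P`. -/
theorem shrinkage_risk (n : ℕ) (hn : 1 ≤ n) (r δ : ℝ) (hr : 0 < r) (hδ : 0 ≤ δ) :
    (∀ P : Measure ℝ, IsProbabilityMeasure P → (∀ᵐ x ∂P, |x| ≤ r) →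
      ∫ D, ((∑ i, D i) / (n : ℝ) / (1 + δ) - ∫ x, x ∂P) ^ 2
          ∂(Measure.pi fun _ : Fin n => P)
        = ((∫ x, (x - ∫ y, y ∂P) ^ 2 ∂P) / n + (∫ x, x ∂P) ^ 2 * δ ^ 2) / (1 + δ) ^ 2)
    ∧
    sSup {e : ℝ | ∃ P : Measure ℝ, IsProbabilityMeasure P ∧ (∀ᵐ x ∂P, |x| ≤ r) ∧
        e = ∫ D, ((∑ i, D i) / (n : ℝ) / (1 + δ) - ∫ x, x ∂P) ^ 2
              ∂(Measure.pi fun _ : Fin n => P)}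
      = if δ ≤ 1 / Real.sqrt n then r ^ 2 / (n * (1 + δ) ^ 2)
        else r ^ 2 * δ ^ 2 / (1 + δ) ^ 2 := by
  have hn₀ : n ≠ 0 := by omega
  refine ⟨fun P _ hPr => ?_, ?_⟩
  · have := shrinkageRisk_eq hn₀ (δ := δ) (by positivity) (memLp_id_of_ae_abs_le hPr)
    rwa [variance_eq_integral aemeasurable_id] at this
  · refine (isGreatest_shrinkageRisk hn₀ hr.le hδ).csSup_eq.trans ?_
    rw [max_inv_sq_eq_ite (by positivity) hδ]
    split_ifs <;> field_simp
end

section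
/- For the bounded 1-dimensional mean estimation problem under worst-case stability, the constrained minimax risk satisfies R_{n,∞}(β) ≥ ((2r - nβ)/2)_+^2 for every β ≥ 0, where R_{n,∞}(β) is the infimum over all β-worst-case-stable estimators θ̂ of the supremum over distributions P supported on [-r,r] of E(θ̂(D_n) - E_P[X])^2. -/
/-!
Put `r` in every coordinate of one dataset and `-r` in every coordinate of the other.
They are `n` Hamming steps apart, so by stability and the triangle inequality in `L¹`
the estimator's outputs on them are within `nβ` in `L¹`. Since the two true means are `2r`
apart, the `L¹` errors on the two datasets add up to at least `2r - nβ`; by Jensen one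
of the two mean squared errors is at least `((2r - nβ)/2)₊²`, and the corresponding point
mass is the hard distribution.
-/

open MeasureTheory

section Hamming

variable {ι : Type*} [Fintype ι] [DecidableEq ι] {β : ι → Type*} [∀ i, DecidableEq (β i)]

theorem hammingDist_update_le_one (x : ∀ i, β i) (i : ι) (b : β i) :
    hammingDist x (Function.update x i b) ≤ 1 :=
  Finset.card_le_one.2 fun j hj k hk => by
    simp only [Finset.mem_filter, Finset.mem_univ, true_and] at hj hk
    by_contra hjk
    rcases eq_or_ne j i with rfl | hj'
    · exact hk (Function.update_of_ne (Ne.symm hjk) _ _).symm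
    · exact hj (Function.update_of_ne hj' _ _).symm

theorem hammingDist_update_add_one {x y : ∀ i, β i} {i : ι} (h : x i ≠ y i) :
    hammingDist (Function.update x i (y i)) y + 1 = hammingDist x y := by
  unfold hammingDist
  rw [← Finset.card_erase_add_one (s := {j | x j ≠ y j}) (by simpa using h)]
  congr 2
  ext j
  rcases eq_or_ne j i with rfl | hj <;> simp [*]

theorem dist_le_hammingDist_mul {E : Type*} [PseudoMetricSpace E] {S : ∀ i, Set (β i)}
    {f : (∀ i, β i) → E} {c : ℝ}
    (hf : ∀ x y, (∀ i, x i ∈ S i) → (∀ i, y i ∈ S i) → hammingDist x y ≤ 1 →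
      dist (f x) (f y) ≤ c)
    {x y : ∀ i, β i} (hx : ∀ i, x i ∈ S i) (hy : ∀ i, y i ∈ S i) :
    dist (f x) (f y) ≤ hammingDist x y * c := by
  induction h : hammingDist x y generalizing x with
  | zero => simp [hammingDist_eq_zero.1 h]
  | succ k ih =>
    obtain ⟨i, hi⟩ := Function.ne_iff.1 (hammingDist_ne_zero.1 (h.trans_ne k.succ_ne_zero))
    have hstep := hammingDist_update_add_one hi
    have hz : ∀ j, Function.update x i (y i) j ∈ S j := by
      intro j
      rcases eq_or_ne j i with rfl | hj <;> simp [*]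
    set z := Function.update x i (y i)
    calc dist (f x) (f y) ≤ dist (f x) (f z) + dist (f z) (f y) := dist_triangle _ _ _
      _ ≤ c + k * c := add_le_add (hf _ _ hx hz (hammingDist_update_le_one x i _))
          (ih hz (by omega))
      _ = (k + 1 : ℕ) * c := by push_cast; ring

end Hamming

theorem hammingDist_const_of_ne {ι α : Type*} [Fintype ι] [DecidableEq α] {a b : α}
    (h : a ≠ b) :
    hammingDist (fun _ : ι => a) (fun _ => b) = Fintype.card ι := by
  simp [hammingDist, h]

theorem MeasureTheory.sq_integral_abs_le_integral_sq {Ω : Type*} [MeasurableSpace Ω]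
    {μ : Measure Ω} [IsProbabilityMeasure μ] {f : Ω → ℝ} (hf : MemLp f 2 μ) :
    (∫ ω, |f ω| ∂μ) ^ 2 ≤ ∫ ω, f ω ^ 2 ∂μ := by
  have hvar := ProbabilityTheory.variance_eq_sub hf.abs
  have h0 := ProbabilityTheory.variance_nonneg |f| μ
  simp only [Pi.pow_apply, Pi.abs_apply, sq_abs] at hvar
  linarith

theorem MeasureTheory.Measure.pi_dirac {ι : Type*} [Fintype ι] {X : ι → Type*}
    [∀ i, MeasurableSpace (X i)] (x : ∀ i, X i) :
    Measure.pi (fun i => Measure.dirac (x i)) = Measure.dirac x := by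
  rw [← Measure.infinitePi_eq_pi, Measure.infinitePi_dirac]

theorem MeasureTheory.Integrable.dist_toL1 {Ω : Type*} [MeasurableSpace Ω] {μ : Measure Ω}
    {f g : Ω → ℝ} (hf : Integrable f μ) (hg : Integrable g μ) :
    dist (hf.toL1 f) (hg.toL1 g) = ∫ ω, |f ω - g ω| ∂μ := by
  rw [dist_eq_norm, ← Integrable.toL1_sub, L1.norm_of_fun_eq_integral_norm]
  simp [Real.norm_eq_abs]

theorem max_sub_div_two_sq_le_max_integral_sq {Ω : Type*} [MeasurableSpace Ω] {μ : Measure Ω}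
    [IsProbabilityMeasure μ] {f g : Ω → ℝ} (hf : MemLp f 2 μ) (hg : MemLp g 2 μ) (a b : ℝ) :
    max ((|a - b| - ∫ ω, |f ω - g ω| ∂μ) / 2) 0 ^ 2 ≤
      max (∫ ω, (f ω - a) ^ 2 ∂μ) (∫ ω, (g ω - b) ^ 2 ∂μ) := by
  have hfa := hf.sub (memLp_const a)
  have hgb := hg.sub (memLp_const b)
  set u := ∫ ω, |f ω - a| ∂μ
  set v := ∫ ω, |g ω - b| ∂μ
  have hIfa : Integrable (fun ω => |f ω - a|) μ := (hfa.integrable one_le_two).abs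
  have hIfg : Integrable (fun ω => |f ω - g ω|) μ := ((hf.sub hg).integrable one_le_two).abs
  have hIgb : Integrable (fun ω => |g ω - b|) μ := (hgb.integrable one_le_two).abs
  have hsum : |a - b| ≤ u + ∫ ω, |f ω - g ω| ∂μ + v := by
    calc |a - b| = ∫ _, |a - b| ∂μ := by simp
      _ ≤ ∫ ω, (|f ω - a| + |f ω - g ω| + |g ω - b|) ∂μ := by
          refine integral_mono (integrable_const _) ((hIfa.add hIfg).add hIgb) fun ω => ?_
          have h₁ := abs_sub_le a (f ω) b
          have h₂ := abs_sub_le (f ω) (g ω) b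
          rw [abs_sub_comm a (f ω)] at h₁
          linarith
      _ = _ := by
          rw [integral_add (f := fun ω => |f ω - a| + |f ω - g ω|) (hIfa.add hIfg) hIgb,
            integral_add hIfa hIfg]
  have hu : u ^ 2 ≤ ∫ ω, (f ω - a) ^ 2 ∂μ := sq_integral_abs_le_integral_sq hfa
  have hv : v ^ 2 ≤ ∫ ω, (g ω - b) ^ 2 ∂μ := sq_integral_abs_le_integral_sq hgb
  have hm : max ((|a - b| - ∫ ω, |f ω - g ω| ∂μ) / 2) 0 ≤ max u v :=
    max_le (by linarith [le_max_left u v, le_max_right u v])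
      (le_max_of_le_left (integral_nonneg fun _ => abs_nonneg _))
  refine (pow_le_pow_left₀ (le_max_right _ _) hm 2).trans ?_
  rcases le_total u v with h | h
  · rw [max_eq_right h]; exact hv.trans (le_max_right _ _)
  · rw [max_eq_left h]; exact hu.trans (le_max_left _ _)

theorem bounded_mean_worst_case_lower_bound_general (n : ℕ) (r β : ℝ)
    (hr : 0 < r)
    (θhat : (Fin n → ℝ) → ℝ → ℝ)
    (hL2 : ∀ D : Fin n → ℝ, MemLp (θhat D) 2 (volume.restrict (Set.Icc (0 : ℝ) 1)))
    (hstable : ∀ D D' : Fin n → ℝ, (∀ i, D i ∈ Set.Icc (-r) r) →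
      (∀ i, D' i ∈ Set.Icc (-r) r) → hammingDist D D' ≤ 1 →
      ∫ ξ in Set.Icc (0 : ℝ) 1, |θhat D ξ - θhat D' ξ| ≤ β) :
    ∃ P : Measure ℝ, IsProbabilityMeasure P ∧ (∀ᵐ x ∂P, x ∈ Set.Icc (-r) r) ∧
      max ((2 * r - n * β) / 2) 0 ^ 2 ≤
        ∫ D, (∫ ξ in Set.Icc (0 : ℝ) 1, (θhat D ξ - ∫ x, x ∂P) ^ 2)
          ∂(Measure.pi fun _ : Fin n => P) := by
  have : IsProbabilityMeasure (volume.restrict (Set.Icc (0 : ℝ) 1)) :=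
    ⟨by simp [Real.volume_Icc]⟩
  have hint D := (hL2 D).integrable one_le_two
  have hchain :
      ∫ ξ in Set.Icc (0 : ℝ) 1, |θhat (fun _ => r) ξ - θhat (fun _ => -r) ξ| ≤ n * β := by
    have h := dist_le_hammingDist_mul (f := fun D => (hint D).toL1 _)
      (S := fun _ => Set.Icc (-r) r)
      (fun D D' hD hD' h => ((hint D).dist_toL1 (hint D')).trans_le (hstable D D' hD hD' h))
      (x := fun _ => r) (y := fun _ => -r) (fun _ => ⟨by linarith, le_rfl⟩)
      (fun _ => ⟨le_rfl, by linarith⟩)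
    rwa [hammingDist_const_of_ne (by linarith), Fintype.card_fin, Integrable.dist_toL1] at h
  have key := max_sub_div_two_sq_le_max_integral_sq (hL2 fun _ => r) (hL2 fun _ => -r) r (-r)
  rw [sub_neg_eq_add, ← two_mul, abs_of_pos (by linarith)] at key
  have hlow : max ((2 * r - n * β) / 2) 0 ^ 2 ≤ max ((2 * r - ∫ ξ in Set.Icc (0 : ℝ) 1,
      |θhat (fun _ => r) ξ - θhat (fun _ => -r) ξ|) / 2) 0 ^ 2 := by gcongr
  rcases le_max_iff.1 (hlow.trans key) with h | h
  · refine ⟨Measure.dirac r, inferInstance,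
      (ae_dirac_iff measurableSet_Icc).2 ⟨by linarith, le_rfl⟩, ?_⟩
    rwa [Measure.pi_dirac (fun _ : Fin n => r), integral_dirac, integral_dirac]
  · refine ⟨Measure.dirac (-r), inferInstance,
      (ae_dirac_iff measurableSet_Icc).2 ⟨le_rfl, by linarith⟩, ?_⟩
    rwa [Measure.pi_dirac (fun _ : Fin n => -r), integral_dirac, integral_dirac]

/-- Worst-case-stability-constrained minimax lower bound for bounded 1-d mean
estimation: every β-worst-case-stable (randomized) estimator has worst-case risk
at least `((2r - nβ)/2)₊²`. -/
theorem bounded_mean_worst_case_lower_bound (n : ℕ) (hn : 1 ≤ n) (r β : ℝ)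
    (hr : 0 < r) (hβ : 0 ≤ β)
    (θhat : (Fin n → ℝ) → ℝ → ℝ)
    (hL2 : ∀ D : Fin n → ℝ, MemLp (θhat D) 2 (volume.restrict (Set.Icc (0 : ℝ) 1)))
    (hstable : ∀ D D' : Fin n → ℝ, (∀ i, D i ∈ Set.Icc (-r) r) →
      (∀ i, D' i ∈ Set.Icc (-r) r) → hammingDist D D' ≤ 1 →
      ∫ ξ in Set.Icc (0 : ℝ) 1, |θhat D ξ - θhat D' ξ| ≤ β) :
    ∃ P : Measure ℝ, IsProbabilityMeasure P ∧ (∀ᵐ x ∂P, x ∈ Set.Icc (-r) r) ∧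
      max ((2 * r - n * β) / 2) 0 ^ 2 ≤
        ∫ D, (∫ ξ in Set.Icc (0 : ℝ) 1, (θhat D ξ - ∫ x, x ∂P) ^ 2)
          ∂(Measure.pi fun _ : Fin n => P) :=
  bounded_mean_worst_case_lower_bound_general n r β hr θhat hL2 hstable
end

section
/- Let X_1, ..., X_{n+1} ∈ R^d and define the self-normalized estimator θ̂(D) = min{1, 2nr/∑_{i∈D}||X_i||_2} · (mean of D) on any dataset D of size n. If ||D^{\i}||_1 := ∑_{j≠i}||X_j||_2 > 2nr for all i ∈ [n+1], then (1/(n+1)^2) ∑_{1 ≤ i,j ≤ n+1} ||θ̂(D^{\i}) - θ̂(D^{\j})||_2 ≤ 24r/(n+1). -/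
open Finset

lemma smul_diff_bound {E : Type*} [NormedAddCommGroup E] [NormedSpace ℝ E]
    (r a b : ℝ) (hr : 0 < r) (ha : 0 < a) (hb : 0 < b)
    (u v : E) (c : ℝ) (huv : ‖u - v‖ ≤ c) (hba : |b - a| ≤ c)
    (hv : ‖v‖ ≤ b) :
    ‖(2 * r / a) • u - (2 * r / b) • v‖ ≤ 4 * r * c / a := by
  have hc0 : 0 ≤ c := le_trans (norm_nonneg _) huv
  have hdecomp : (2 * r / a) • u - (2 * r / b) • v
      = (2 * r / a) • (u - v) + ((2 * r / a) - (2 * r / b)) • v := by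
    module
  rw [hdecomp]
  have habs : |2 * r / a - 2 * r / b| = 2 * r * |b - a| / (a * b) := by
    rw [div_sub_div _ _ ha.ne' hb.ne', abs_div, abs_of_pos (mul_pos ha hb)]
    congr 1
    rw [show 2 * r * b - a * (2 * r) = (2 * r) * (b - a) by ring, abs_mul,
      abs_of_pos (by positivity)]
  calc ‖(2 * r / a) • (u - v) + ((2 * r / a) - (2 * r / b)) • v‖
      ≤ ‖(2 * r / a) • (u - v)‖ + ‖((2 * r / a) - (2 * r / b)) • v‖ := norm_add_le _ _
    _ = (2 * r / a) * ‖u - v‖ + |2 * r / a - 2 * r / b| * ‖v‖ := by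
        rw [norm_smul, norm_smul, Real.norm_eq_abs, Real.norm_eq_abs,
          abs_of_pos (by positivity)]
    _ ≤ (2 * r / a) * c + (2 * r * c / (a * b)) * b := by
        have h1 : (2 * r / a) * ‖u - v‖ ≤ (2 * r / a) * c :=
          mul_le_mul_of_nonneg_left huv (by positivity)
        have h2 : |2 * r / a - 2 * r / b| * ‖v‖ ≤ (2 * r * c / (a * b)) * b := by
          apply mul_le_mul _ hv (norm_nonneg _) (by positivity)
          rw [habs]; gcongr
        linarith
    _ = 4 * r * c / a := by field_simp; ring

/-- Average-case stability of the self-normalized mean estimator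
`θ̂(D) = min{1, 2nr/∑_{i∈D}‖X_i‖} · mean(D)` in the regime where all leave-one-out
ℓ₁-norms exceed `2nr`:
`(1/(n+1)²) ∑_{i,j} ‖θ̂(D^{\i}) - θ̂(D^{\j})‖ ≤ 24r/(n+1)`. -/
theorem self_normalized_mean_average_stability (n d : ℕ) (hn : 1 ≤ n) (r : ℝ) (hr : 0 < r)
    (X : Fin (n + 1) → EuclideanSpace ℝ (Fin d))
    (h : ∀ i : Fin (n + 1), 2 * (n : ℝ) * r < ∑ j ∈ Finset.univ.erase i, ‖X j‖) :
    (1 / ((n : ℝ) + 1) ^ 2) *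
      ∑ i : Fin (n + 1), ∑ j : Fin (n + 1),
        ‖(min 1 (2 * (n : ℝ) * r / ∑ z ∈ Finset.univ.erase i, ‖X z‖)) •
            ((n : ℝ)⁻¹ • ∑ z ∈ Finset.univ.erase i, X z)
          - (min 1 (2 * (n : ℝ) * r / ∑ z ∈ Finset.univ.erase j, ‖X z‖)) •
            ((n : ℝ)⁻¹ • ∑ z ∈ Finset.univ.erase j, X z)‖
      ≤ 24 * r / ((n : ℝ) + 1) := by
  classical
  have hnpos : (0 : ℝ) < n := by exact_mod_cast hn
  set S : Fin (n + 1) → ℝ := fun i => ∑ z ∈ Finset.univ.erase i, ‖X z‖ with hSdef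
  set T : Fin (n + 1) → EuclideanSpace ℝ (Fin d) :=
    fun i => ∑ z ∈ Finset.univ.erase i, X z with hTdef
  set Stot : ℝ := ∑ z, ‖X z‖ with hStotdef
  have hSi : ∀ i, S i = Stot - ‖X i‖ := fun i => by
    simp only [hSdef, hStotdef, Finset.sum_erase_eq_sub (Finset.mem_univ i)]
  have hTi : ∀ i, T i = (∑ z, X z) - X i := fun i => by
    simp only [hTdef, Finset.sum_erase_eq_sub (Finset.mem_univ i)]
  have hSpos : ∀ i, 0 < S i := fun i => lt_trans (by positivity) (h i)
  have hStotpos : 0 < Stot := by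
    have h0 := hSpos 0
    rw [hSi 0] at h0
    have := norm_nonneg (X 0)
    linarith
  -- the estimator in simplified form
  have hθ : ∀ i, (min 1 (2 * (n : ℝ) * r / S i)) • ((n : ℝ)⁻¹ • T i)
      = (2 * r / S i) • T i := by
    intro i
    have hle : 2 * (n : ℝ) * r / S i ≤ 1 := le_of_lt ((div_lt_one (hSpos i)).mpr (h i))
    rw [min_eq_right hle, smul_smul]
    congr 1
    have hn0 : (n : ℝ) ≠ 0 := hnpos.ne'
    have hS0 : S i ≠ 0 := (hSpos i).ne'
    field_simp
  -- norm of X j bounded by S i when i ≠ j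
  have hXle : ∀ i j : Fin (n + 1), i ≠ j → ‖X j‖ ≤ S i := by
    intro i j hij
    exact Finset.single_le_sum (f := fun z => ‖X z‖) (fun z _ => norm_nonneg _)
      (Finset.mem_erase.mpr ⟨hij.symm, Finset.mem_univ j⟩)
  -- asymmetric key bound
  have key : ∀ i j : Fin (n + 1), i ≠ j →
      ‖(2 * r / S i) • T i - (2 * r / S j) • T j‖ ≤ 4 * r * (‖X i‖ + ‖X j‖) / S i := by
    intro i j hij
    apply smul_diff_bound r (S i) (S j) hr (hSpos i) (hSpos j)
    · rw [hTi i, hTi j]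
      have : ((∑ z, X z) - X i) - ((∑ z, X z) - X j) = X j - X i := by abel
      rw [this]
      exact le_trans (norm_sub_le _ _) (by rw [add_comm])
    · rw [hSi i, hSi j]
      have h1 := norm_nonneg (X i)
      have h2 := norm_nonneg (X j)
      rw [abs_le]
      constructor <;> [linarith; linarith]
    · exact norm_sum_le _ _
  -- symmetrized bound
  have key2 : ∀ i j : Fin (n + 1),
      ‖(2 * r / S i) • T i - (2 * r / S j) • T j‖
        ≤ 8 * r * (‖X i‖ + ‖X j‖) / Stot := by
    intro i j
    rcases eq_or_ne i j with rfl | hij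
    · rw [sub_self, norm_zero]
      positivity
    · have hsum : Stot ≤ S i + S j := by
        have h1 := hXle i j hij
        have h2 := hXle j i hij.symm
        rw [hSi i, hSi j] at *
        linarith
    -- use the smaller of the two asymmetric bounds
      rcases le_total (S i) (S j) with hle | hle
      · have hb := key j i hij.symm
        rw [norm_sub_rev] at hb
        refine le_trans hb ?_
        rw [div_le_div_iff₀ (hSpos j) hStotpos]
        have hc : (0:ℝ) ≤ 4 * r * (‖X i‖ + ‖X j‖) := by positivity
        have h2S : Stot ≤ 2 * S j := by linarith
        nlinarith [mul_le_mul_of_nonneg_left h2S hc]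
      · have hb := key i j hij
        refine le_trans hb ?_
        rw [div_le_div_iff₀ (hSpos i) hStotpos]
        have hc : (0:ℝ) ≤ 4 * r * (‖X i‖ + ‖X j‖) := by positivity
        have h2S : Stot ≤ 2 * S i := by linarith
        nlinarith [mul_le_mul_of_nonneg_left h2S hc]
  have hterm : ∀ i j : Fin (n + 1),
      ‖(min 1 (2 * (n : ℝ) * r / S i)) • ((n : ℝ)⁻¹ • T i)
        - (min 1 (2 * (n : ℝ) * r / S j)) • ((n : ℝ)⁻¹ • T j)‖
        ≤ 8 * r * (‖X i‖ + ‖X j‖) / Stot := by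
    intro i j
    rw [hθ i, hθ j]
    exact key2 i j
  have hsumval : ∑ i : Fin (n + 1), ∑ j : Fin (n + 1),
      8 * r * (‖X i‖ + ‖X j‖) / Stot = 16 * r * ((n : ℝ) + 1) := by
    have hinner : ∀ i : Fin (n + 1), ∑ j : Fin (n + 1),
        8 * r * (‖X i‖ + ‖X j‖) / Stot
        = ((n : ℝ) + 1) * (8 * r * ‖X i‖ / Stot) + 8 * r := by
      intro i
      have : ∀ j : Fin (n + 1), 8 * r * (‖X i‖ + ‖X j‖) / Stot
          = 8 * r * ‖X i‖ / Stot + (8 * r / Stot) * ‖X j‖ := by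
        intro j; field_simp
      rw [Finset.sum_congr rfl fun j _ => this j, Finset.sum_add_distrib,
        Finset.sum_const, Finset.card_univ, Fintype.card_fin, ← Finset.mul_sum,
        ← hStotdef, nsmul_eq_mul]
      push_cast
      field_simp
    rw [Finset.sum_congr rfl fun i _ => hinner i, Finset.sum_add_distrib,
      Finset.sum_const, Finset.card_univ, Fintype.card_fin, ← Finset.mul_sum,
      nsmul_eq_mul]
    have : ∑ i : Fin (n + 1), 8 * r * ‖X i‖ / Stot
        = (8 * r / Stot) * Stot := by
      rw [hStotdef, Finset.mul_sum]
      exact Finset.sum_congr rfl fun i _ => by field_simp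
    rw [this]
    push_cast
    field_simp
    ring
  have hfinal : ∑ i : Fin (n + 1), ∑ j : Fin (n + 1),
      ‖(min 1 (2 * (n : ℝ) * r / S i)) • ((n : ℝ)⁻¹ • T i)
        - (min 1 (2 * (n : ℝ) * r / S j)) • ((n : ℝ)⁻¹ • T j)‖
      ≤ 16 * r * ((n : ℝ) + 1) := by
    rw [← hsumval]
    exact Finset.sum_le_sum fun i _ => Finset.sum_le_sum fun j _ => hterm i j
  have hnp1 : (0 : ℝ) < (n : ℝ) + 1 := by positivity
  calc (1 / ((n : ℝ) + 1) ^ 2) *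
      ∑ i : Fin (n + 1), ∑ j : Fin (n + 1),
        ‖(min 1 (2 * (n : ℝ) * r / S i)) • ((n : ℝ)⁻¹ • T i)
          - (min 1 (2 * (n : ℝ) * r / S j)) • ((n : ℝ)⁻¹ • T j)‖
      ≤ (1 / ((n : ℝ) + 1) ^ 2) * (16 * r * ((n : ℝ) + 1)) := by
        apply mul_le_mul_of_nonneg_left hfinal (by positivity)
    _ = 16 * r / ((n : ℝ) + 1) := by field_simp
    _ ≤ 24 * r / ((n : ℝ) + 1) := by
        gcongr
        linarith
end

section
/- Let X_1, ..., X_n be i.i.d. random vectors in the ℓ_∞-ball of radius r in R^d with s-sparse mean θ (||θ||_0 ≤ s), and let X̄ be the sample mean. Define τ_s = |X̄|_{(s+1)} (the (s+1)-st largest absolute coordinate of X̄) and θ̂_j = sign(X̄_j)(|X̄_j| - τ_s)_+. Then for every u ≥ 0, with probability at least 1 - e^{-u}, ||θ̂ - θ||_2 ≤ 8r√(s(log(4d) + u)/n). -/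
/-!
By Hoeffding's inequality and a union bound over the `d` coordinates, with probability at least
`1 - e^{-u}` every coordinate of the sample mean `m` satisfies `|m j - θ j| ≤ t`, where
`t = r √(2 (log (4d) + u) / n)`. On that event every `j` with `t < |m j|` lies in the support of
`θ`, so there are at most `s` of them and the threshold `τ_s` is at most `t`. Soft thresholding
moves each coordinate by at most `τ_s`, so `|θ̂ j - θ j| ≤ 2t`, and `θ̂ - θ` vanishes outside
`supp θ ∪ supp θ̂`, which has at most `2s` elements (`θ̂ j ≠ 0` forces `τ_s < |m j|`, true of at
most `s` indices). Hence `‖θ̂ - θ‖₂² ≤ 8 s t² = 16 r² s (log (4d) + u) / n`.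
-/

open MeasureTheory ProbabilityTheory Finset
open scoped NNReal

noncomputable def softThreshold (τ x : ℝ) : ℝ := Real.sign x * max (|x| - τ) 0

lemma softThreshold_eq_zero_of_abs_le {τ x : ℝ} (h : |x| ≤ τ) : softThreshold τ x = 0 := by
  simp [softThreshold, max_eq_right (sub_nonpos.2 h)]

lemma abs_softThreshold_sub_le {τ : ℝ} (hτ : 0 ≤ τ) (x : ℝ) : |softThreshold τ x - x| ≤ τ := by
  rcases le_or_gt |x| τ with h | h
  · rwa [softThreshold_eq_zero_of_abs_le h, zero_sub, abs_neg]
  have hmax : max (|x| - τ) 0 = |x| - τ := max_eq_left (by linarith)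
  rcases lt_trichotomy x 0 with hx | rfl | hx
  · rw [softThreshold, hmax, Real.sign_of_neg hx, abs_of_neg hx]
    rw [show -1 * (-x - τ) - x = τ by ring, abs_of_nonneg hτ]
  · rw [abs_zero] at h; linarith
  · rw [softThreshold, hmax, Real.sign_of_pos hx, abs_of_pos hx]
    rw [show 1 * (x - τ) - x = -τ by ring, abs_neg, abs_of_nonneg hτ]

section OrderStatistic

variable {α : Type*} [LinearOrder α] {d : ℕ} (f : Fin d → α) (k : Fin d)

lemma card_sort_apply_lt_le : #{j | f (Tuple.sort f k) < f j} ≤ d - 1 - k := by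
  rw [← Fin.card_Ioi k]
  refine card_le_card_of_injOn (Tuple.sort f).symm (fun j hj => ?_)
    (Tuple.sort f).symm.injective.injOn
  simp only [coe_filter, mem_univ, true_and, Set.mem_ofPred_eq] at hj
  simp only [coe_Ioi, Set.mem_Ioi]
  by_contra! hle
  have := Tuple.monotone_sort f hle
  simp only [Function.comp_apply, Equiv.apply_symm_apply] at this
  exact this.not_gt hj

lemma sort_apply_le_of_card_lt {t : α} (h : #{j | t < f j} < d - k) : f (Tuple.sort f k) ≤ t := by
  by_contra! hlt
  refine h.not_ge ?_
  rw [← Fin.card_Ici k]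
  refine card_le_card_of_injOn (Tuple.sort f) (fun j hj => ?_) (Tuple.sort f).injective.injOn
  simp only [coe_Ici, Set.mem_Ici] at hj
  simpa using hlt.trans_le (Tuple.monotone_sort f hj)

end OrderStatistic

lemma card_abs_gt_le_card_ne_zero {ι : Type*} [Fintype ι] {m θ : ι → ℝ} {t : ℝ}
    (hmθ : ∀ j, |m j - θ j| ≤ t) : #{j | t < |m j|} ≤ #{j | θ j ≠ 0} := by
  refine card_le_card fun j => ?_
  simp only [mem_filter, mem_univ, true_and]
  intro hj hθ
  have := hmθ j
  rw [hθ, sub_zero] at this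
  exact this.not_gt hj

lemma sum_sq_le_card_mul_sq {ι : Type*} [Fintype ι] {g : ι → ℝ} (S : Finset ι) {c : ℝ}
    (hS : ∀ j ∉ S, g j = 0) (hc : ∀ j ∈ S, |g j| ≤ c) : ∑ j, g j ^ 2 ≤ #S * c ^ 2 := by
  rw [← sum_subset (subset_univ S) fun j _ hj => by rw [hS j hj, sq, zero_mul], ← nsmul_eq_mul]
  exact sum_le_card_nsmul _ _ _ fun j hj => sq_le_sq' (abs_le.1 (hc j hj)).1 (abs_le.1 (hc j hj)).2

/-- `Tuple.sort` sorts increasingly, so for `k = d - s - 1` the threshold is the `(s+1)`-st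
largest `|m j|`. -/
theorem sum_sq_softThreshold_sort_sub_le {d s : ℕ} {m θ : Fin d → ℝ} (k : Fin d)
    (hk : (k : ℕ) + s + 1 = d) {t : ℝ} (hmθ : ∀ j, |m j - θ j| ≤ t)
    (hθ : #{j | θ j ≠ 0} ≤ s) :
    ∑ j, (softThreshold |m (Tuple.sort (fun j => |m j|) k)| (m j) - θ j) ^ 2 ≤ 8 * s * t ^ 2 := by
  set τ := |m (Tuple.sort (fun j => |m j|) k)|
  have ht : 0 ≤ t := (abs_nonneg _).trans (hmθ k)
  have hτ : τ ≤ t := sort_apply_le_of_card_lt (fun j => |m j|) k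
    ((card_abs_gt_le_card_ne_zero hmθ).trans_lt (by omega))
  set S : Finset (Fin d) := {j | θ j ≠ 0}
  set T : Finset (Fin d) := {j | τ < |m j|}
  have hT : #T ≤ s := (card_sort_apply_lt_le (fun j => |m j|) k).trans (by omega)
  have hcard : (#(S ∪ T) : ℝ) ≤ 2 * s := by exact_mod_cast (card_union_le S T).trans (by omega)
  refine (sum_sq_le_card_mul_sq (S ∪ T) (c := 2 * t) ?_ ?_).trans ?_
  · intro j hj
    simp only [S, T, mem_union, mem_filter, mem_univ, true_and, not_or, not_not, not_lt] at hj
    rw [softThreshold_eq_zero_of_abs_le hj.2, hj.1, sub_zero]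
  · intro j _
    calc |softThreshold τ (m j) - θ j| ≤ |softThreshold τ (m j) - m j| + |m j - θ j| :=
          abs_sub_le _ _ _
      _ ≤ τ + t := add_le_add (abs_softThreshold_sub_le (abs_nonneg _) _) (hmθ j)
      _ ≤ 2 * t := by linarith
  · nlinarith [sq_nonneg t]

namespace ProbabilityTheory.HasSubgaussianMGF

variable {Ω : Type*} [MeasurableSpace Ω] {μ : Measure Ω} {X : Ω → ℝ} {c : ℝ≥0}

lemma measure_abs_ge_le (h : HasSubgaussianMGF X c μ) {ε : ℝ} (hε : 0 ≤ ε) :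
    μ.real {ω | ε ≤ |X ω|} ≤ 2 * Real.exp (-ε ^ 2 / (2 * c)) := by
  have hsplit : {ω | ε ≤ |X ω|} = {ω | ε ≤ X ω} ∪ {ω | ε ≤ (-X) ω} := by
    ext ω; simp [le_abs', le_neg, or_comm]
  calc μ.real {ω | ε ≤ |X ω|} ≤ μ.real {ω | ε ≤ X ω} + μ.real {ω | ε ≤ (-X) ω} :=
        hsplit ▸ measureReal_union_le _ _
    _ ≤ _ := by linarith [h.measure_ge_le hε, h.neg.measure_ge_le hε]

end ProbabilityTheory.HasSubgaussianMGF

section SampleMean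

variable {Ω : Type*} [MeasurableSpace Ω] (P : Measure Ω) [IsProbabilityMeasure P] {g : Ω → ℝ}

lemma hasSubgaussianMGF_sum_sub_integral_pi (hg : AEMeasurable g P) {a b : ℝ}
    (hab : ∀ᵐ ω ∂P, g ω ∈ Set.Icc a b) (n : ℕ) :
    HasSubgaussianMGF (fun D : Fin n → Ω => ∑ i, (g (D i) - P[g]))
      (n * (‖b - a‖₊ / 2) ^ 2) (Measure.pi fun _ => P) := by
  have hindep : iIndepFun (fun (i : Fin n) (D : Fin n → Ω) => g (D i) - P[g])
      (Measure.pi fun _ => P) :=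
    iIndepFun_pi (Ω := fun _ => Ω) (X := fun _ ω => g ω - P[g]) fun _ => hg.sub_const _
  have hcoord (i : Fin n) : HasSubgaussianMGF (fun D : Fin n → Ω => g (D i) - P[g])
      ((‖b - a‖₊ / 2) ^ 2) (Measure.pi fun _ => P) := by
    refine HasSubgaussianMGF.of_map (X := fun ω => g ω - P[g]) (Y := fun D : Fin n → Ω => D i)
      (measurable_pi_apply i).aemeasurable ?_
    rw [(measurePreserving_eval (fun _ : Fin n => P) i).map_eq]
    exact hasSubgaussianMGF_of_mem_Icc hg hab
  simpa using HasSubgaussianMGF.sum_of_iIndepFun hindep (s := univ) fun i _ => hcoord i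

lemma measure_abs_sampleMean_sub_integral_gt_le (hg : AEMeasurable g P) {r : ℝ}
    (hgr : ∀ᵐ ω ∂P, |g ω| ≤ r) {n : ℕ} (hn : 0 < n) {ε : ℝ} (hε : 0 ≤ ε) :
    (Measure.pi fun _ : Fin n => P).real {D | ε < |(∑ i, g (D i)) / n - P[g]|}
      ≤ 2 * Real.exp (-n * ε ^ 2 / (2 * r ^ 2)) := by
  have hn' : (0 : ℝ) < n := Nat.cast_pos.2 hn
  have hsum (D : Fin n → Ω) : ∑ i, (g (D i) - P[g]) = n * ((∑ i, g (D i)) / n - P[g]) := by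
    rw [sum_sub_distrib, sum_const, card_univ, Fintype.card_fin, nsmul_eq_mul]
    field_simp
  have hsub : {D : Fin n → Ω | ε < |(∑ i, g (D i)) / n - P[g]|}
      ⊆ {D | n * ε ≤ |∑ i, (g (D i) - P[g])|} := fun D hD => by
    rw [Set.mem_ofPred_eq, hsum, abs_mul, Nat.abs_cast]
    exact mul_le_mul_of_nonneg_left hD.le hn'.le
  have hoeff := (hasSubgaussianMGF_sum_sub_integral_pi P hg
    (hgr.mono fun ω h => abs_le.1 h) n).measure_abs_ge_le (mul_nonneg hn'.le hε)
  refine (measureReal_mono hsub).trans (hoeff.trans_eq ?_)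
  have hc : ((n * (‖r - -r‖₊ / 2) ^ 2 : ℝ≥0) : ℝ) = n * r ^ 2 := by simp [← two_mul]
  rw [hc]
  congr 2
  field_simp

end SampleMean

lemma measure_exists_abs_sampleMean_sub_integral_gt_le {ι : Type*} [Fintype ι]
    (P : Measure (ι → ℝ)) [IsProbabilityMeasure P] {r : ℝ} (hP : ∀ᵐ x ∂P, ∀ j, |x j| ≤ r)
    {n : ℕ} (hn : 0 < n) {ε : ℝ} (hε : 0 ≤ ε) :
    (Measure.pi fun _ : Fin n => P).real {D | ∃ j, ε < |(∑ i, D i j) / n - ∫ x, x j ∂P|}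
      ≤ Fintype.card ι * (2 * Real.exp (-n * ε ^ 2 / (2 * r ^ 2))) := by
  rw [Set.ofPred_exists, ← nsmul_eq_mul]
  refine (measureReal_iUnion_fintype_le _).trans (sum_le_card_nsmul _ _ _ fun j _ => ?_)
  exact measure_abs_sampleMean_sub_integral_gt_le P (measurable_pi_apply j).aemeasurable
    (hP.mono fun x h => h j) hn hε

lemma one_sub_measureReal_le_of_compl_subset {Ω : Type*} [MeasurableSpace Ω] {μ : Measure Ω}
    [IsProbabilityMeasure μ] {A B : Set Ω} (h : Aᶜ ⊆ B) : 1 - μ.real B ≤ μ.real A := by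
  have := calc 1 = μ.real Set.univ := probReal_univ.symm
    _ ≤ μ.real (A ∪ B) := measureReal_mono fun ω _ => (em (ω ∈ A)).imp id (h ·)
    _ ≤ μ.real A + μ.real B := measureReal_union_le _ _
  linarith

/-- High-probability bound for the data-driven soft-thresholding estimator of an
`s`-sparse bounded mean: with probability at least `1 - e^{-u}`,
`‖θ̂ - θ‖₂ ≤ 8r√(s(log(4d) + u)/n)`, where `τ_s` is the `(s+1)`-st largest
absolute coordinate of the sample mean and
`θ̂_j = sign(X̄_j)(|X̄_j| - τ_s)₊`. -/
theorem sparse_mean_soft_threshold_tail (n d s : ℕ) (hn : 1 ≤ n) (hsd : s + 1 ≤ d)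
    (r : ℝ) (hr : 0 < r) (u : ℝ) (hu : 0 ≤ u)
    (P : Measure (Fin d → ℝ)) [IsProbabilityMeasure P]
    (hbdd : ∀ᵐ x ∂P, ∀ j, |x j| ≤ r)
    (hsparse : {j : Fin d | (∫ x, x j ∂P) ≠ 0}.ncard ≤ s) :
    ENNReal.ofReal (1 - Real.exp (-u)) ≤
      (Measure.pi fun _ : Fin n => P)
        {D : Fin n → Fin d → ℝ |
          Real.sqrt (∑ j : Fin d,
            (Real.sign ((∑ i, D i j) / (n : ℝ)) *
              max (|(∑ i, D i j) / (n : ℝ)| -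
                |(∑ i, D i ((Tuple.sort fun j' : Fin d => |(∑ i, D i j') / (n : ℝ)|)
                    ⟨d - s - 1, Nat.sub_lt (Nat.lt_of_lt_of_le (Nat.succ_pos s) hsd) (Nat.succ_pos s)⟩)) / (n : ℝ)|) 0
             - ∫ x, x j ∂P) ^ 2)
          ≤ 8 * r * Real.sqrt ((s : ℝ) * (Real.log (4 * d) + u) / n)} := by
  set θ : Fin d → ℝ := fun j => ∫ x, x j ∂P
  let m (D : Fin n → Fin d → ℝ) (j : Fin d) : ℝ := (∑ i, D i j) / n
  let k : Fin d := ⟨d - s - 1, by omega⟩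
  set L := Real.log (4 * d) + u
  set t := r * √(2 * L / n)
  have hd : (1 : ℝ) ≤ d := by exact_mod_cast (Nat.le_add_left 1 s).trans hsd
  have hL : 0 ≤ L := add_nonneg (Real.log_nonneg (by linarith)) hu
  have hθ : #{j | θ j ≠ 0} ≤ s := by
    rwa [Set.ncard_eq_toFinset_card', Set.toFinset_ofPred] at hsparse
  have hbad : (Measure.pi fun _ : Fin n => P).real {D | ∃ j, t < |m D j - θ j|}
      ≤ Real.exp (-u) / 2 := by
    refine (measure_exists_abs_sampleMean_sub_integral_gt_le P hbdd hn (by positivity)).trans_eq ?_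
    rw [Fintype.card_fin, mul_pow, Real.sq_sqrt (by positivity),
      show -(n : ℝ) * (r ^ 2 * (2 * L / n)) / (2 * r ^ 2) = -L by field_simp,
      neg_add, Real.exp_add, Real.exp_neg, Real.exp_log (by positivity)]
    field_simp
    ring
  have hgood (D : Fin n → Fin d → ℝ) (hD : ∀ j, |m D j - θ j| ≤ t) :
      √(∑ j, (softThreshold |m D (Tuple.sort (fun j => |m D j|) k)| (m D j) - θ j) ^ 2)
        ≤ 8 * r * √(s * L / n) := by
    refine Real.sqrt_le_iff.2 ⟨by positivity,
      (sum_sq_softThreshold_sort_sub_le k (by dsimp only [k]; omega) hD hθ).trans ?_⟩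
    calc 8 * s * t ^ 2 = 16 * (r ^ 2 * (s * L / n)) := by
          rw [mul_pow, Real.sq_sqrt (by positivity)]; ring
      _ ≤ 64 * (r ^ 2 * (s * L / n)) := by gcongr; norm_num
      _ = (8 * r * √(s * L / n)) ^ 2 := by rw [mul_pow, Real.sq_sqrt (by positivity)]; ring
  rw [ENNReal.ofReal_le_iff_le_toReal (measure_ne_top _ _)]
  refine le_trans (by linarith [Real.exp_pos (-u)]) (one_sub_measureReal_le_of_compl_subset
    (B := {D | ∃ j, t < |m D j - θ j|}) fun D hD => ?_)
  by_contra hD'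
  simp only [Set.mem_ofPred_eq, not_exists, not_lt] at hD'
  exact hD (hgood D hD')
end

section
/- Suppose a randomized mechanism M : X^n → R satisfies ε-differential privacy and |E[M(D) | D]| ≤ r almost surely. Then the deterministic estimator θ̂(D) := E[M(D) | D] satisfies: for any two datasets D, D' differing in one data point, |θ̂(D) - θ̂(D')| ≤ r(e^ε - 1). In particular, if ε < 1 then |θ̂(D) - θ̂(D')| ≤ 2rε. -/
open MeasureTheory

private lemma dp_int_le (μ ν : Measure ℝ) [IsProbabilityMeasure μ] [IsProbabilityMeasure ν]
    (c : ℝ) (hc : 0 ≤ c)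
    (h : ∀ S : Set ℝ, MeasurableSet S → μ S ≤ ENNReal.ofReal c * ν S)
    (g : ℝ → ℝ) (hg : Measurable g)
    (hg0μ : ∀ᵐ x ∂μ, 0 ≤ g x) (hg0ν : ∀ᵐ x ∂ν, 0 ≤ g x)
    (hgν : Integrable g ν) :
    ∫ x, g x ∂μ ≤ c * ∫ x, g x ∂ν := by
  have hμle : μ ≤ (ENNReal.ofReal c) • ν := by
    rw [Measure.le_iff]
    intro s hs
    simpa using h s hs
  have hL : ∫⁻ x, ENNReal.ofReal (g x) ∂μ
      ≤ ENNReal.ofReal c * ∫⁻ x, ENNReal.ofReal (g x) ∂ν := by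
    calc ∫⁻ x, ENNReal.ofReal (g x) ∂μ
        ≤ ∫⁻ x, ENNReal.ofReal (g x) ∂((ENNReal.ofReal c) • ν) :=
          lintegral_mono' hμle le_rfl
      _ = ENNReal.ofReal c * ∫⁻ x, ENNReal.ofReal (g x) ∂ν := lintegral_smul_measure _ _
  have hνfin : ∫⁻ x, ENNReal.ofReal (g x) ∂ν < ⊤ := by
    have h1 : ∫⁻ x, ENNReal.ofReal (g x) ∂ν ≤ ∫⁻ x, ‖g x‖₊ ∂ν := by
      apply lintegral_mono
      intro x
      exact Real.ofReal_le_enorm (g x)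
    exact lt_of_le_of_lt h1 hgν.2
  have hμeq : ∫ x, g x ∂μ = (∫⁻ x, ENNReal.ofReal (g x) ∂μ).toReal :=
    integral_eq_lintegral_of_nonneg_ae hg0μ hg.aestronglyMeasurable
  have hνeq : ∫ x, g x ∂ν = (∫⁻ x, ENNReal.ofReal (g x) ∂ν).toReal :=
    integral_eq_lintegral_of_nonneg_ae hg0ν hg.aestronglyMeasurable
  rw [hμeq, hνeq]
  have hfin : ENNReal.ofReal c * ∫⁻ x, ENNReal.ofReal (g x) ∂ν ≠ ⊤ :=
    ENNReal.mul_ne_top (by simp) hνfin.ne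
  calc (∫⁻ x, ENNReal.ofReal (g x) ∂μ).toReal
      ≤ (ENNReal.ofReal c * ∫⁻ x, ENNReal.ofReal (g x) ∂ν).toReal :=
        ENNReal.toReal_mono hfin hL
    _ = c * (∫⁻ x, ENNReal.ofReal (g x) ∂ν).toReal := by
        rw [ENNReal.toReal_mul, ENNReal.toReal_ofReal hc]

/-- Privacy-to-stability conversion: if the mechanism `M` is ε-differentially private
and its conditional law given the data is supported in `[-r, r]`, then
`θ̂(D) := E[M(D)|D]` satisfies `|θ̂(D) - θ̂(D')| ≤ r(e^ε - 1)` for neighboring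
datasets, and `≤ 2rε` when `ε < 1`. -/
theorem dp_to_stability {α : Type*} [DecidableEq α] (n : ℕ) (ε r : ℝ)
    (hε : 0 ≤ ε) (hr : 0 ≤ r)
    (M : (Fin n → α) → Measure ℝ) (hMprob : ∀ D, IsProbabilityMeasure (M D))
    (hsupp : ∀ D, ∀ᵐ m ∂(M D), |m| ≤ r)
    (hDP : ∀ D D' : Fin n → α, hammingDist D D' ≤ 1 → ∀ S : Set ℝ, MeasurableSet S →
      M D S ≤ ENNReal.ofReal (Real.exp ε) * M D' S) :
    ∀ D D' : Fin n → α, hammingDist D D' ≤ 1 →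
      |(∫ m, m ∂(M D)) - ∫ m, m ∂(M D')| ≤ r * (Real.exp ε - 1) ∧
      (ε < 1 → |(∫ m, m ∂(M D)) - ∫ m, m ∂(M D')| ≤ 2 * r * ε) := by
  intro D D' hDD'
  have hsym : hammingDist D' D ≤ 1 := by rwa [hammingDist_comm]
  haveI := hMprob D; haveI := hMprob D'
  have hexp1 : (1:ℝ) ≤ Real.exp ε := Real.one_le_exp hε
  -- integrability of the identity
  have hint : ∀ E : Fin n → α, Integrable (fun m : ℝ => m) (M E) := by
    intro E
    haveI := hMprob E
    refine ⟨measurable_id.aestronglyMeasurable, ?_⟩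
    apply HasFiniteIntegral.of_bounded (C := r)
    filter_upwards [hsupp E] with x hx
    simpa using hx
  have hintp : ∀ E : Fin n → α, Integrable (fun m : ℝ => m + r) (M E) :=
    fun E => (hint E).add (integrable_const r)
  have hintm : ∀ E : Fin n → α, Integrable (fun m : ℝ => r - m) (M E) :=
    fun E => (integrable_const r).sub (hint E)
  have hp0 : ∀ E : Fin n → α, ∀ᵐ x ∂(M E), 0 ≤ x + r := by
    intro E; filter_upwards [hsupp E] with x hx
    have := abs_le.1 hx; linarith [this.1]
  have hm0 : ∀ E : Fin n → α, ∀ᵐ x ∂(M E), 0 ≤ r - x := by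
    intro E; filter_upwards [hsupp E] with x hx
    have := abs_le.1 hx; linarith [this.2]
  -- key integral inequalities
  have key : ∀ (E E' : Fin n → α), hammingDist E E' ≤ 1 →
      (∫ m, (m + r) ∂(M E) ≤ Real.exp ε * ∫ m, (m + r) ∂(M E')) ∧
      (∫ m, (r - m) ∂(M E) ≤ Real.exp ε * ∫ m, (r - m) ∂(M E')) := by
    intro E E' hEE'
    haveI := hMprob E; haveI := hMprob E'
    constructor
    · exact dp_int_le (M E) (M E') _ (Real.exp_pos ε).le (hDP E E' hEE') _
        (measurable_id.add_const r) (hp0 E) (hp0 E') (hintp E')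
    · exact dp_int_le (M E) (M E') _ (Real.exp_pos ε).le (hDP E E' hEE') _
        (measurable_const.sub measurable_id) (hm0 E) (hm0 E') (hintm E')
  set a := ∫ m, m ∂(M D) with ha
  set b := ∫ m, m ∂(M D') with hb
  have hap : ∀ E : Fin n → α, ∫ m, (m + r) ∂(M E) = (∫ m, m ∂(M E)) + r := by
    intro E
    haveI := hMprob E
    rw [integral_add (hint E) (integrable_const r), integral_const]
    simp
  have ham : ∀ E : Fin n → α, ∫ m, (r - m) ∂(M E) = r - ∫ m, m ∂(M E) := by
    intro E
    haveI := hMprob E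
    rw [integral_sub (integrable_const r) (hint E), integral_const]
    simp
  have I1 : a + r ≤ Real.exp ε * (b + r) := by
    have := (key D D' hDD').1; rwa [hap D, hap D'] at this
  have I2 : r - a ≤ Real.exp ε * (r - b) := by
    have := (key D D' hDD').2; rwa [ham D, ham D'] at this
  have I3 : b + r ≤ Real.exp ε * (a + r) := by
    have := (key D' D hsym).1; rwa [hap D', hap D] at this
  have I4 : r - b ≤ Real.exp ε * (r - a) := by
    have := (key D' D hsym).2; rwa [ham D', ham D] at this
  set k := Real.exp ε - 1 with hk
  have hk0 : 0 ≤ k := by linarith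
  have habs : |a - b| ≤ r * k := by
    rw [abs_le]
    constructor
    · -- -(r*k) ≤ a - b, i.e. b - a ≤ r*k; use I3 and I2
      nlinarith [mul_nonneg hk0 hr, mul_nonneg (mul_nonneg hk0 hk0) hr]
    · -- a - b ≤ r*k; use I1 and I4
      nlinarith [mul_nonneg hk0 hr, mul_nonneg (mul_nonneg hk0 hk0) hr]
  refine ⟨habs, fun hε1 => ?_⟩
  have hexp2 : Real.exp ε ≤ 1 + 2 * ε := by
    have hconv := convexOn_exp.2 (Set.mem_univ (0:ℝ)) (Set.mem_univ (1:ℝ))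
      (by linarith : (0:ℝ) ≤ 1 - ε) hε (by ring)
    simp only [smul_eq_mul, mul_zero, mul_one, zero_add, Real.exp_zero] at hconv
    nlinarith [Real.exp_one_lt_d9, hε]
  calc |a - b| ≤ r * k := habs
    _ ≤ 2 * r * ε := by rw [hk]; nlinarith
end
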